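/- For a vector f = (c_j)_{j∈ℕ} ∈ D(N), the following are equivalent: (1) Φf ∈ D(N) (so that f ∈ D([Φ,N])) and ΦNf − NΦf = i·f; (2) Σ_{j∈ℕ} (−1)^j c_j = 0 (this series converges absolutely since f ∈ D(N)). -/

import Mathlib

noncomputable section

open MeasureTheory Complex Real AddCircle ContinuousLinearMap
open scoped ENNReal NNReal

namespace GW

/-- The Hilbert space `H = ℓ²(ℕ, ℂ)`. -/
abbrev H : Type := lp (fun _ : ℕ => ℂ) 2

instance fact2pi : Fact (0 < 2 * Real.pi) := ⟨by positivity⟩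

/-- The circle `𝕋`, realized as `ℝ / 2πℤ`; the point `θ` corresponds to `e^{iθ}`. -/
abbrev Circle2 : Type := AddCircle (2 * Real.pi)

/-- Normalized Lebesgue (Haar) measure `dθ/2π` on the circle. -/
abbrev μT : Measure Circle2 := @AddCircle.haarAddCircle (2 * Real.pi) fact2pi

/-- `L²(𝕋)` with respect to normalized Lebesgue measure. -/
abbrev L2T : Type := MeasureTheory.Lp ℂ 2 μT

/-- Extension of an `ℕ`-indexed coefficient sequence to `ℤ` by zero. -/
def extz (f : ℕ → ℂ) : ℤ → ℂ := fun n => if 0 ≤ n then f n.toNat else 0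

lemma extz_natCast (f : ℕ → ℂ) (n : ℕ) : extz f (n : ℤ) = f n := by
  simp [extz]

lemma extz_memℓp (f : H) : Memℓp (extz ⇑f) 2 := by
  apply memℓp_gen
  have hs : Summable fun n : ℕ => ‖(⇑f) n‖ ^ (2 : ℝ≥0∞).toReal :=
    (lp.memℓp f).summable (by norm_num)
  have h0 : ∀ z : ℤ, z ∉ Set.range ((↑·) : ℕ → ℤ) →
      ‖extz ⇑f z‖ ^ (2 : ℝ≥0∞).toReal = 0 := by
    intro z hz
    have hneg : ¬ (0 : ℤ) ≤ z := fun h => hz ⟨z.toNat, by simpa using Int.toNat_of_nonneg h⟩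
    simp only [extz, if_neg hneg, norm_zero]
    rw [Real.zero_rpow (by norm_num)]
  have hinj : Function.Injective ((↑·) : ℕ → ℤ) := fun a b h => by simpa using h
  refine (hinj.summable_iff h0).mp ?_
  refine hs.congr fun n => ?_
  simp [Function.comp, extz_natCast]

/-- The zero-extension `ℓ²(ℕ,ℂ) → ℓ²(ℤ,ℂ)`. -/
def extlp (f : H) : lp (fun _ : ℤ => ℂ) 2 := ⟨extz ⇑f, extz_memℓp f⟩

/-- `J` as a plain function: send `(c_n)_{n∈ℕ}` to `Σ_{n∈ℕ} c_n e^{inθ}` in `L²(𝕋)`,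
via the Fourier Hilbert basis of `L²(𝕋)`. -/
def Jmap (f : H) : L2T := (@fourierBasis (2 * Real.pi) fact2pi).repr.symm (extlp f)

lemma extlp_add (f g : H) : extlp (f + g) = extlp f + extlp g := by
  apply Subtype.ext
  funext n
  show extz (⇑(f + g)) n = extz ⇑f n + extz ⇑g n
  rcases le_or_gt 0 n with h | h
  · simp only [extz, if_pos h]
    exact congrFun (lp.coeFn_add f g) n.toNat
  · simp [extz, if_neg (not_le.mpr h)]

lemma extlp_smul (c : ℂ) (f : H) : extlp (c • f) = c • extlp f := by
  apply Subtype.ext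
  funext n
  show extz (⇑(c • f)) n = c • extz ⇑f n
  rcases le_or_gt 0 n with h | h
  · simp only [extz, if_pos h]
    rw [lp.coeFn_smul]
    rfl
  · simp [extz, if_neg (not_le.mpr h)]

/-- `J` as a linear map. -/
def Jlin : H →ₗ[ℂ] L2T where
  toFun := Jmap
  map_add' f g := show Jmap (f + g) = Jmap f + Jmap g by
    unfold Jmap; rw [extlp_add, map_add]
  map_smul' c f := show Jmap (c • f) = c • Jmap f by
    unfold Jmap; rw [extlp_smul, _root_.map_smul]

lemma norm_extlp (f : H) : ‖extlp f‖ = ‖f‖ := by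
  rw [lp.norm_eq_tsum_rpow (by norm_num : 0 < (2 : ℝ≥0∞).toReal) (extlp f),
    lp.norm_eq_tsum_rpow (by norm_num : 0 < (2 : ℝ≥0∞).toReal) f]
  congr 1
  have hinj : Function.Injective ((↑·) : ℕ → ℤ) := fun a b h => by simpa using h
  have h0 : ∀ z, z ∉ Set.range ((↑·) : ℕ → ℤ) →
      ‖extlp f z‖ ^ (2 : ℝ≥0∞).toReal = 0 := by
    intro z hz
    have hneg : ¬ (0 : ℤ) ≤ z := fun h => hz ⟨z.toNat, by simpa using Int.toNat_of_nonneg h⟩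
    show ‖extz ⇑f z‖ ^ (2 : ℝ≥0∞).toReal = 0
    simp only [extz, if_neg hneg, norm_zero]
    rw [Real.zero_rpow (by norm_num)]
  have hsupp : (Function.support fun z => ‖extlp f z‖ ^ (2 : ℝ≥0∞).toReal) ⊆
      Set.range ((↑·) : ℕ → ℤ) := by
    intro z hz
    by_contra h
    exact hz (h0 z h)
  have key := hinj.tsum_eq (f := fun z => ‖extlp f z‖ ^ (2 : ℝ≥0∞).toReal) hsupp
  rw [← key]
  exact tsum_congr fun n => by
    show ‖extz ⇑f (n : ℤ)‖ ^ (2 : ℝ≥0∞).toReal = _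
    rw [extz_natCast]

/-- The isometric embedding `J : H → L²(𝕋)` as a continuous linear map; it maps the `n`-th
standard basis vector of `ℓ²(ℕ,ℂ)` to `θ ↦ e^{inθ}`, `n ∈ ℕ`. -/
def JH : H →L[ℂ] L2T :=
  LinearMap.mkContinuousOfExistsBound Jlin
    ⟨1, fun f => by
      simp only [Jlin, LinearMap.coe_mk, AddHom.coe_mk, one_mul, Jmap]
      rw [LinearIsometryEquiv.norm_map]
      exact le_of_eq (norm_extlp f)⟩

end GW

namespace GW

/-- The argument function on the circle: `e^{iθ} ↦ θ` with `θ ∈ (−π, π]`, as a `ℂ`-valued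
function. -/
def argFun : Circle2 → ℂ :=
  fun x => (((AddCircle.measurableEquivIoc (2 * Real.pi) (-Real.pi) x : Set.Ioc (-Real.pi) (-Real.pi + 2 * Real.pi)) : ℝ) : ℂ)

lemma argFun_memℒp : MemLp argFun ⊤ μT := by
  apply memLp_top_of_bound (C := Real.pi)
  · exact (Complex.measurable_ofReal.comp (measurable_subtype_coe.comp
      (AddCircle.measurableEquivIoc (2 * Real.pi) (-Real.pi)).measurable)).aestronglyMeasurable
  · refine Filter.Eventually.of_forall fun x => ?_
    have h := (AddCircle.measurableEquivIoc (2 * Real.pi) (-Real.pi) x).2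
    have h1 : -Real.pi < ((AddCircle.measurableEquivIoc (2 * Real.pi) (-Real.pi) x : Set.Ioc (-Real.pi) (-Real.pi + 2 * Real.pi)) : ℝ) := h.1
    have h2 := h.2
    rw [argFun, Complex.norm_real, Real.norm_eq_abs, abs_le]
    constructor
    · linarith
    · linarith

lemma mul_memℒp (φ : Circle2 → ℂ) (hφ : MemLp φ ⊤ μT) (f : L2T) : MemLp (φ • ⇑f) 2 μT :=
  (Lp.memLp f).smul hφ

lemma mul_toLp_add (φ : Circle2 → ℂ) (hφ : MemLp φ ⊤ μT) (f g : L2T) :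
    (mul_memℒp φ hφ (f + g)).toLp (φ • ⇑(f + g)) =
      (mul_memℒp φ hφ f).toLp (φ • ⇑f) + (mul_memℒp φ hφ g).toLp (φ • ⇑g) := by
  rw [MemLp.toLp_congr (mul_memℒp φ hφ (f + g)) ((mul_memℒp φ hφ f).add (mul_memℒp φ hφ g))
    ((Lp.coeFn_add f g).mono fun x hx => by
      simp only [Pi.smul_apply', hx, Pi.add_apply, smul_add])]
  exact MemLp.toLp_add _ _

lemma mul_toLp_smul (φ : Circle2 → ℂ) (hφ : MemLp φ ⊤ μT) (c : ℂ) (f : L2T) :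
    (mul_memℒp φ hφ (c • f)).toLp (φ • ⇑(c • f)) = c • (mul_memℒp φ hφ f).toLp (φ • ⇑f) := by
  rw [MemLp.toLp_congr (mul_memℒp φ hφ (c • f)) ((mul_memℒp φ hφ f).const_smul c)
    ((Lp.coeFn_smul c f).mono fun x hx => by
      rw [Pi.smul_apply', hx, Pi.smul_apply, Pi.smul_apply, Pi.smul_apply', smul_comm])]
  exact MemLp.toLp_const_smul c _

/-- Multiplication by a bounded measurable function, as a linear map on `L²(𝕋)`. -/
def mulLin (φ : Circle2 → ℂ) (hφ : MemLp φ ⊤ μT) : L2T →ₗ[ℂ] L2T where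
  toFun f := (mul_memℒp φ hφ f).toLp (φ • ⇑f)
  map_add' f g := mul_toLp_add φ hφ f g
  map_smul' c f := mul_toLp_smul φ hφ c f

/-- Multiplication by a bounded measurable function, as a bounded operator on `L²(𝕋)`. -/
def mulCLM (φ : Circle2 → ℂ) (hφ : MemLp φ ⊤ μT) : L2T →L[ℂ] L2T :=
  LinearMap.mkContinuousOfExistsBound (mulLin φ hφ)
    ⟨(eLpNorm φ ⊤ μT).toReal, fun f => by
      simp only [mulLin, LinearMap.coe_mk, AddHom.coe_mk]
      rw [Lp.norm_toLp, Lp.norm_def]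
      rw [← ENNReal.toReal_mul]
      apply ENNReal.toReal_mono
      · exact ENNReal.mul_ne_top hφ.eLpNorm_ne_top (Lp.memLp f).eLpNorm_ne_top
      · exact eLpNorm_smul_le_mul_eLpNorm (Lp.memLp f).1 hφ.1⟩

/-- The Garrison–Wong phase operator `Φ = J* ∘ M_arg ∘ J` on `H`. -/
def Phi : H →L[ℂ] H :=
  (ContinuousLinearMap.adjoint JH) ∘L (mulCLM argFun argFun_memℒp) ∘L JH

/-- The domain of the number operator: `{f ∈ H : Σ n² |c_n|² < ∞}`. -/
def domN : Set H := {f : H | Summable fun n : ℕ => (n : ℝ) ^ 2 * ‖f n‖ ^ 2}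

lemma Nop_memℓp {f : H} (hf : f ∈ domN) : Memℓp (fun n : ℕ => (n : ℂ) * f n) 2 := by
  apply memℓp_gen
  refine Summable.congr hf fun n => ?_
  have h2 : ((2 : ℝ≥0∞)).toReal = ((2 : ℕ) : ℝ) := by norm_num
  rw [h2, Real.rpow_natCast]
  simp [norm_mul, mul_pow]

/-- The number operator `N`, defined on its maximal domain `domN`: `(Nf)_n = n·c_n`. -/
def Nop (f : H) (hf : f ∈ domN) : H := ⟨fun n : ℕ => (n : ℂ) * f n, Nop_memℓp hf⟩

/-- The standard orthonormal basis `(e_n)` of `H`. -/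
def eH (n : ℕ) : H := lp.single 2 n (1 : ℂ)

lemma norm_exp_mul (x : ℝ) (c : ℂ) : ‖Complex.exp ((x : ℂ) * Complex.I) * c‖ = ‖c‖ := by
  rw [norm_mul, Complex.norm_exp_ofReal_mul_I, one_mul]

lemma U_memℓp (t : ℝ) (f : H) : Memℓp (fun n : ℕ => Complex.exp (((n * t : ℝ) : ℂ) * Complex.I) * f n) 2 := by
  apply memℓp_gen
  refine Summable.congr ((lp.memℓp f).summable (by norm_num)) fun n => ?_
  rw [norm_exp_mul]

/-- The unitary group `U_t = e^{itN}`: `(U_t f)_n = e^{int} f_n`, as a linear map. -/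
def Ulin (t : ℝ) : H →ₗ[ℂ] H where
  toFun f := ⟨fun n : ℕ => Complex.exp (((n * t : ℝ) : ℂ) * Complex.I) * f n, U_memℓp t f⟩
  map_add' f g := by
    apply Subtype.ext
    funext n
    show Complex.exp _ * (⇑(f + g)) n = _
    rw [lp.coeFn_add]
    show Complex.exp _ * (f n + g n) =
      Complex.exp _ * f n + Complex.exp _ * g n
    ring
  map_smul' c f := by
    apply Subtype.ext
    funext n
    show Complex.exp _ * (⇑(c • f)) n = _
    rw [lp.coeFn_smul]
    show Complex.exp _ * (c * f n) = c * (Complex.exp _ * f n)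
    ring

/-- The unitary group `U_t = e^{itN}`: `(U_t f)_n = e^{int} f_n`. -/
def U (t : ℝ) : H →L[ℂ] H :=
  LinearMap.mkContinuousOfExistsBound (Ulin t)
    ⟨1, fun f => by
      simp only [Ulin, LinearMap.coe_mk, AddHom.coe_mk, one_mul]
      apply le_of_eq
      rw [lp.norm_eq_tsum_rpow (by norm_num : 0 < (2 : ℝ≥0∞).toReal),
        lp.norm_eq_tsum_rpow (by norm_num : 0 < (2 : ℝ≥0∞).toReal) f]
      congr 1
      refine tsum_congr fun n => ?_
      show ‖Complex.exp (((n * t : ℝ) : ℂ) * Complex.I) * f n‖ ^ (2 : ℝ≥0∞).toReal = _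
      rw [norm_exp_mul]⟩

/-- The indicator function of a subset of the circle, as a `ℂ`-valued function. -/
def indFun (B : Set Circle2) : Circle2 → ℂ := Set.indicator B (fun _ => (1 : ℂ))

lemma indFun_memℒp {B : Set Circle2} (hB : MeasurableSet B) : MemLp (indFun B) ⊤ μT := by
  apply memLp_top_of_bound (C := 1)
  · exact (aestronglyMeasurable_const.indicator hB)
  · refine Filter.Eventually.of_forall fun x => ?_
    by_cases h : x ∈ B <;> simp [indFun, h]

open scoped Classical in
/-- The POVM `Q(B) = J* ∘ M_{1_B} ∘ J` obtained by compressing multiplication by the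
indicator of `B` to `H` (defined to be `0` for non-measurable `B`). -/
def Qop (B : Set Circle2) : H →L[ℂ] H :=
  if h : MeasurableSet B then
    (ContinuousLinearMap.adjoint JH) ∘L (mulCLM (indFun B) (indFun_memℒp h)) ∘L JH
  else 0

/-! Compressing multiplication by a bounded `φ` to `H` gives the Toeplitz matrix
`(Φ f)_n = Σ_m φ̂(n - m) c_m`, and the argument function has Fourier coefficients `φ̂(0) = 0`,
`φ̂(k) = i (-1)^k / k`. Hence `(m - n) φ̂(n - m) = i δ_{mn} - i (-1)^(n+m)`, which gives, for
`f ∈ D(N)`, `(Φ N f)_n - n (Φ f)_n = i c_n - i (-1)^n Σ_j (-1)^j c_j`.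
At `n = 0` this forces the alternating sum to vanish; conversely, when it vanishes,
`(n (Φ f)_n)_n = Φ N f - i f` lies in `ℓ²`, i.e. `Φ f ∈ D(N)`. -/

open scoped InnerProductSpace

lemma fourierCoeff_mul_fourier {T : ℝ} [Fact (0 < T)] (φ : AddCircle T → ℂ) (n m : ℤ) :
    fourierCoeff (fun x => φ x * fourier m x) n = fourierCoeff φ (n - m) := by
  unfold fourierCoeff
  congr 1
  funext x
  rw [show -(n - m) = -n + m by ring, fourier_add, smul_eq_mul, smul_eq_mul]
  ring

lemma fourierCoeffOn_one_of_ne_zero {a b : ℝ} (hab : a < b) {k : ℤ} (hk : k ≠ 0) :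
    fourierCoeffOn hab (fun _ => (1 : ℂ)) k = 0 := by
  have : Fact (0 < b - a) := ⟨by linarith⟩
  have h : liftIoc (b - a) a (fun _ => (1 : ℂ)) = fourier 0 := by
    funext x
    rw [fourier_zero]
    rfl
  rw [fourierCoeffOn, h, fourierCoeff_fourier, Pi.single_eq_of_ne hk]

lemma summable_norm_of_summable_sq_mul_norm_sq {E : Type*} [SeminormedAddCommGroup E]
    {c : ℕ → E} (hc : Summable fun n : ℕ => (n : ℝ) ^ 2 * ‖c n‖ ^ 2) :
    Summable fun n => ‖c n‖ := by
  rw [← summable_nat_add_iff 1]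
  have hinv : Summable fun n : ℕ => 1 / ((n + 1 : ℕ) : ℝ) ^ 2 :=
    (summable_nat_add_iff 1).mpr (Real.summable_one_div_nat_pow.mpr one_lt_two)
  refine .of_nonneg_of_le (fun _ => norm_nonneg _) (fun n => ?_)
    (hinv.add ((summable_nat_add_iff 1).mpr hc))
  set k : ℝ := ((n + 1 : ℕ) : ℝ)
  have hk : k ≠ 0 := by positivity
  have hamgm := two_mul_le_add_sq k⁻¹ (k * ‖c (n + 1)‖)
  rw [mul_assoc, inv_mul_cancel_left₀ hk, inv_pow, mul_pow, ← one_div] at hamgm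
  linarith [norm_nonneg (c (n + 1))]

lemma extz_eq_zero_of_notMem_range (g : ℕ → ℂ) {z : ℤ}
    (hz : z ∉ Set.range ((↑) : ℕ → ℤ)) :
    extz g z = 0 :=
  if_neg fun h => hz ⟨z.toNat, Int.toNat_of_nonneg h⟩

lemma JH_apply (f : H) : JH f = (fourierBasis (T := 2 * π)).repr.symm (extlp f) := rfl

lemma hasSum_JH (f : H) :
    HasSum (fun m : ℕ => f m • fourierBasis (T := 2 * π) (m : ℤ)) (JH f) := by
  have h := (fourierBasis (T := 2 * π)).hasSum_repr_symm (extlp f)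
  rw [← Nat.cast_injective.hasSum_iff fun z hz => by
    rw [show extlp f z = extz f z from rfl, extz_eq_zero_of_notMem_range _ hz, zero_smul],
    ← JH_apply] at h
  convert h using 2 with m
  exact congrArg (· • _) (extz_natCast _ m).symm

lemma JH_eH (n : ℕ) : JH (eH n) = fourierBasis (T := 2 * π) (n : ℤ) := by
  classical
  refine (hasSum_JH (eH n)).unique ?_
  convert hasSum_single n fun m hm => ?_ using 1
  · simp [eH]
  · simp [eH, lp.single_apply, hm]

lemma inner_fourierBasis (g : L2T) (n : ℤ) :
    ⟪fourierBasis (T := 2 * π) n, g⟫_ℂ = fourierCoeff g n := by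
  rw [← HilbertBasis.repr_apply_apply, fourierBasis_repr]

lemma adjoint_JH_apply (g : L2T) (n : ℕ) : adjoint JH g n = fourierCoeff g n := by
  classical
  have h : adjoint JH g n = ⟪eH n, adjoint JH g⟫_ℂ := by simp [eH, lp.inner_single_left]
  rw [h, adjoint_inner_right, JH_eH, inner_fourierBasis]

lemma fourierCoeff_mulCLM (φ : Circle2 → ℂ) (hφ : MemLp φ ⊤ μT) (g : L2T) :
    fourierCoeff (mulCLM φ hφ g) = fourierCoeff fun x => φ x * g x :=
  fourierCoeff_congr_ae (mul_memℒp φ hφ g).coeFn_toLp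

lemma hasSum_adjoint_JH_mulCLM_JH (φ : Circle2 → ℂ) (hφ : MemLp φ ⊤ μT) (f : H)
    (n : ℕ) :
    HasSum (fun m : ℕ => fourierCoeff φ (n - m) * f m)
      ((adjoint JH ∘L mulCLM φ hφ ∘L JH) f n) := by
  set L := innerSL ℂ (fourierBasis (T := 2 * π) n) ∘L mulCLM φ hφ
  have hL : ∀ g, L g = fourierCoeff (mulCLM φ hφ g) n := fun g => inner_fourierBasis _ _
  have hL_basis : ∀ m : ℕ, L (fourierBasis (T := 2 * π) m) = fourierCoeff φ (n - m) := by
    intro m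
    have hm : ⇑(fourierBasis (T := 2 * π) m) =ᵐ[μT] fourier m := by
      rw [coe_fourierBasis]
      exact coeFn_fourierLp 2 _
    rw [hL, fourierCoeff_mulCLM, ← fourierCoeff_mul_fourier,
      fourierCoeff_congr_ae (hm.mono fun x hx => by rw [hx])]
  have h := L.hasSum (hasSum_JH f)
  simp only [map_smul, hL_basis, smul_eq_mul] at h
  rw [comp_apply, comp_apply, adjoint_JH_apply, ← hL]
  simpa only [mul_comm] using h

lemma argFun_eq_liftIoc : argFun = liftIoc (2 * π) (-π) fun x : ℝ => (x : ℂ) := rfl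

lemma fourierCoeff_argFun_zero : fourierCoeff argFun 0 = 0 := by
  rw [argFun_eq_liftIoc, fourierCoeff_liftIoc_eq, fourierCoeffOn_eq_integral]
  simp only [neg_zero, fourier_zero, one_smul]
  rw [intervalIntegral.integral_ofReal, integral_id]
  ring_nf
  simp

lemma fourierCoeff_argFun_of_ne_zero {k : ℤ} (hk : k ≠ 0) :
    fourierCoeff argFun k = I * (-1) ^ k / k := by
  have hderiv : ∀ x : ℝ, HasDerivAt (fun y : ℝ => (y : ℂ)) 1 x := fun x => by
    simpa using (hasDerivAt_id x).ofReal_comp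
  rw [argFun_eq_liftIoc, fourierCoeff_liftIoc_eq,
    fourierCoeffOn_of_hasDerivAt _ hk (fun x _ => hderiv x) intervalIntegrable_const,
    fourierCoeffOn_one_of_ne_zero _ hk, fourier_coe_apply]
  have hk' : (k : ℂ) ≠ 0 := by exact_mod_cast hk
  have hexp :
      exp (2 * π * I * (-k : ℤ) * ((-π : ℝ) : ℂ) / ((-π + 2 * π - -π : ℝ) : ℂ)) = (-1) ^ k := by
    rw [← exp_pi_mul_I, ← exp_int_mul]
    congr 1
    push_cast
    field_simp
    ring
  rw [hexp]
  push_cast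
  field_simp
  linear_combination (-2 * (-1 : ℂ) ^ k) * I_sq

lemma natCast_sub_mul_fourierCoeff_argFun (n m : ℕ) :
    ((m : ℂ) - n) * fourierCoeff argFun (n - m) =
      (if m = n then I else 0) - I * (-1) ^ n * (-1) ^ m := by
  rcases eq_or_ne m n with rfl | hmn
  · rw [if_pos rfl, sub_self, zero_mul, mul_assoc, ← mul_pow]
    norm_num
  · have hnm : (n : ℂ) - m ≠ 0 := sub_ne_zero.mpr (by exact_mod_cast hmn.symm)
    have hsign : (-1 : ℂ) ^ ((n : ℤ) - m) = (-1) ^ n * (-1) ^ m := by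
      rw [zpow_sub₀ (by norm_num), zpow_natCast, zpow_natCast, div_eq_mul_inv,
        ← inv_pow, inv_neg, inv_one]
    rw [fourierCoeff_argFun_of_ne_zero (by omega), if_neg hmn, hsign]
    push_cast
    field_simp
    ring

lemma mem_domN_of_memℓp {g : H} (h : Memℓp (fun n : ℕ => (n : ℂ) * g n) 2) : g ∈ domN :=
  (h.summable (by norm_num)).congr fun n => by simp [mul_pow]

lemma Nop_apply {f : H} (hf : f ∈ domN) (n : ℕ) : Nop f hf n = n * f n := rfl

lemma summable_neg_one_pow_mul_of_mem_domN {f : H} (hf : f ∈ domN) :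
    Summable fun j : ℕ => (-1 : ℂ) ^ j * f j :=
  .of_norm <| (summable_norm_of_summable_sq_mul_norm_sq hf).congr fun j => by simp

lemma Phi_Nop_apply_sub_mul_Phi_apply (f : H) (hf : f ∈ domN) (n : ℕ) :
    Phi (Nop f hf) n - n * Phi f n =
      I * f n - I * (-1) ^ n * ∑' j : ℕ, (-1 : ℂ) ^ j * f j := by
  have hPhi := hasSum_adjoint_JH_mulCLM_JH argFun argFun_memℒp
  have hNf : HasSum (fun m : ℕ => fourierCoeff argFun (n - m) * (m * f m)) (Phi (Nop f hf) n) :=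
    hPhi (Nop f hf) n
  have hdiag : HasSum (fun m => (if m = n then I else 0) * f m) (I * f n) := by
    convert hasSum_ite_eq n (I * f n) using 2 with m
    split_ifs with h <;> simp [h]
  have halt := (summable_neg_one_pow_mul_of_mem_domN hf).hasSum.mul_left (I * (-1) ^ n)
  refine (hNf.sub ((hPhi f n).mul_left (n : ℂ))).unique ?_
  convert hdiag.sub halt using 1
  funext m
  linear_combination f m * natCast_sub_mul_fourierCoeff_argFun n m

/-- (Lemma `lem:Heisenberg-necsuff`.) For `f = (c_j) ∈ D(N)` the following are
equivalent: (1) `Φf ∈ D(N)` (so that `f ∈ D([Φ,N])`) and `ΦNf − NΦf = i·f`;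
(2) `Σ_j (−1)^j c_j = 0`. -/
theorem heisenberg_iff_alternating_sum_zero (f : H) (hf : f ∈ domN) :
    (∃ h : Phi f ∈ domN, Phi (Nop f hf) - Nop (Phi f) h = Complex.I • f) ↔
      ∑' j : ℕ, (-1 : ℂ) ^ j * f j = 0 := by
  have hcomm := Phi_Nop_apply_sub_mul_Phi_apply f hf
  constructor
  · rintro ⟨hdom, heq⟩
    have h0 : Phi (Nop f hf) 0 = I * f 0 := by
      simpa [Nop_apply] using congrArg (· 0) heq
    have h := hcomm 0
    simp only [Nat.cast_zero, zero_mul, sub_zero, pow_zero, mul_one] at h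
    linear_combination (-I) * (h - h0) + (∑' j : ℕ, (-1 : ℂ) ^ j * f j) * I_sq
  · intro hS
    have hN : ∀ n : ℕ, (n : ℂ) * Phi f n = (Phi (Nop f hf) - I • f) n := fun n => by
      simp only [lp.coeFn_sub, lp.coeFn_smul, Pi.sub_apply, Pi.smul_apply, smul_eq_mul]
      linear_combination -hcomm n + I * (-1) ^ n * hS
    have hdom : Phi f ∈ domN := mem_domN_of_memℓp (by simpa only [hN] using lp.memℓp _)
    refine ⟨hdom, lp.ext (funext fun n => ?_)⟩
    simp only [lp.coeFn_sub, lp.coeFn_smul, Pi.sub_apply, Pi.smul_apply, smul_eq_mul, Nop_apply]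
    linear_combination hcomm n - I * (-1) ^ n * hS

end GW
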